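/- arXiv:1909.11304 — 3 statements merged into one kernel-verified Lean document; each statement's English description precedes it below -/
import Mathlib

section
/- Let n be a positive integer and let x1, x2, x3, x4 be vectors in ℝ^{D_in}. For the one-hidden-layer linear network f_θ(x) = n^{-1/2} Σ_{i=1}^n V_i (Σ_{α=1}^{D_in} U_{iα} x_α) with independent standard Gaussian parameters, the fourth moment satisfies exactly E[f_θ(x1) f_θ(x2) f_θ(x3) f_θ(x4)] = (1 + 2/n) · (⟨x1,x2⟩⟨x3,x4⟩ + ⟨x1,x3⟩⟨x2,x4⟩ + ⟨x1,x4⟩⟨x2,x3⟩). In particular the four-point correlation function is O(n^0) and its connected part is O(n^{-1}) as n → ∞. -/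
/-!
Condition on the first-layer weights `U` and write `h(x) = U x ∈ ℝⁿ`. Given `U`, the network
`n^{-1/2} ⟨V, h(x)⟩` is a linear form in the Gaussian vector `V`, so Isserlis' theorem gives the
conditional fourth moment `n⁻² Σ_pairings ⟨h(x₁), h(x₂)⟩ ⟨h(x₃), h(x₄)⟩`. The coordinates
`hᵢ(x) = ⟨Uᵢ, x⟩` are in turn linear forms in the Gaussian vector `U`, and a second application
of Isserlis gives
`E ⟨h(x₁), h(x₂)⟩ ⟨h(x₃), h(x₄)⟩ = n² ⟨x₁,x₂⟩⟨x₃,x₄⟩ + n (⟨x₁,x₃⟩⟨x₂,x₄⟩ + ⟨x₁,x₄⟩⟨x₂,x₃⟩)`: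
for two distinct rows `i ≠ j` only the pairing that keeps the rows apart survives. Summing over
the three pairings gives `n⁻² (n² + 2n)` times the pairing sum.
-/

open MeasureTheory ProbabilityTheory Asymptotics Filter

/-- The standard Gaussian measure on `ι → ℝ`: all coordinates are independent `N(0,1)`. -/
noncomputable def stdGaussian (ι : Type*) [Fintype ι] : Measure (ι → ℝ) :=
  Measure.pi fun _ => gaussianReal 0 1

/-- The one-hidden-layer linear network of width `n`:
`f_θ(x) = n^{-1/2} Σ_i V_i (Σ_α U_{iα} x_α)`. -/
noncomputable def net1 (n D : ℕ) (θ : (Fin n ⊕ Fin n × Fin D) → ℝ) (x : Fin D → ℝ) : ℝ :=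
  ((n : ℝ) ^ (-(1 / 2 : ℝ))) *
    ∑ i : Fin n, θ (Sum.inl i) * ∑ α : Fin D, θ (Sum.inr (i, α)) * x α

/-- The four-point correlation function of the one-hidden-layer linear network at width `n`. -/
noncomputable def fourPoint (n D : ℕ) (x1 x2 x3 x4 : Fin D → ℝ) : ℝ :=
  ∫ θ, net1 n D θ x1 * net1 n D θ x2 * net1 n D θ x3 * net1 n D θ x4
    ∂(stdGaussian (Fin n ⊕ Fin n × Fin D))

/-- The Euclidean inner product on `ℝ^D`. -/
def ip {D : ℕ} (x y : Fin D → ℝ) : ℝ := ∑ α : Fin D, x α * y α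

open Matrix
open scoped ENNReal

lemma integral_pow_of_odd_gaussianReal {k : ℕ} (hk : Odd k) (v : NNReal) :
    ∫ x, x ^ k ∂gaussianReal 0 v = 0 := by
  have hsymm : ∫ x, x ^ k ∂gaussianReal 0 v = ∫ x, (-x) ^ k ∂gaussianReal 0 v := by
    conv_lhs => rw [← neg_zero, ← gaussianReal_map_neg]
    exact integral_map (by fun_prop) (by fun_prop)
  simp only [hk.neg_pow, integral_neg] at hsymm
  linarith

lemma integral_sq_gaussianReal (v : NNReal) : ∫ x, x ^ 2 ∂gaussianReal 0 v = v := by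
  have := variance_eq_sub (memLp_id_gaussianReal (μ := 0) (v := v) 2)
  simp_all [variance_id_gaussianReal, integral_id_gaussianReal]

open Real in
lemma integral_pow_four_mul_exp_neg_half_sq :
    ∫ x : ℝ, x ^ 4 * exp (-(1 / 2) * x ^ 2) = 3 * √(2 * π) := by
  have hGamma : Gamma ((4 + 1) / 2) = 3 / 4 * √π := by
    rw [show ((4 : ℝ) + 1) / 2 = 1 / 2 + 1 + 1 by norm_num, Gamma_add_one (by norm_num),
      Gamma_add_one (by norm_num), Gamma_one_half_eq]
    ring
  have hpow : (1 / 2 : ℝ) ^ (-(4 + 1) / 2 : ℝ) = 4 * √2 := by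
    rw [one_div, inv_rpow (by norm_num), ← rpow_neg (by norm_num),
      show -(-(4 + 1) / 2 : ℝ) = 2 + 1 / 2 by norm_num, rpow_add (by norm_num), ← sqrt_eq_rpow]
    norm_num
  calc ∫ x : ℝ, x ^ 4 * exp (-(1 / 2) * x ^ 2)
      = 2 * ∫ x in Set.Ioi 0, x ^ (4 : ℝ) * exp (-(1 / 2) * x ^ (2 : ℝ)) := by
        rw [← integral_comp_abs (f := fun x : ℝ => x ^ (4 : ℝ) * exp (-(1 / 2) * x ^ (2 : ℝ)))]
        congr with x
        norm_cast
        rw [even_two.pow_abs, (by decide : Even 4).pow_abs]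
    _ = 3 * √(2 * π) := by
        rw [integral_rpow_mul_exp_neg_mul_rpow (by norm_num) (by norm_num) (by norm_num), hGamma,
          hpow, sqrt_mul (by norm_num)]
        ring

open Real in
lemma integral_pow_four_gaussianReal : ∫ x, x ^ 4 ∂gaussianReal 0 1 = 3 := by
  rw [integral_gaussianReal_eq_integral_smul one_ne_zero]
  simp only [gaussianPDFReal, smul_eq_mul, NNReal.coe_one, mul_one, sub_zero]
  calc ∫ x, (√(2 * π))⁻¹ * exp (-x ^ 2 / 2) * x ^ 4
      = (√(2 * π))⁻¹ * ∫ x : ℝ, x ^ 4 * exp (-(1 / 2) * x ^ 2) := by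
        rw [← integral_const_mul]
        congr with x
        ring_nf
    _ = 3 := by
        rw [integral_pow_four_mul_exp_neg_half_sq]
        field_simp

lemma rpow_neg_half_pow_four {r : ℝ} (hr : 0 ≤ r) : (r ^ (-(1 / 2 : ℝ))) ^ 4 = (r ^ 2)⁻¹ := by
  rw [← Real.rpow_natCast, ← Real.rpow_mul hr, ← Real.rpow_natCast, ← Real.rpow_neg hr]
  norm_num

lemma MeasureTheory.MemLp.mul_of_two_mul {α : Type*} [MeasurableSpace α] {μ : Measure α}
    {f g : α → ℝ} {p : ℝ≥0∞} (hf : MemLp f (2 * p) μ) (hg : MemLp g (2 * p) μ) :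
    MemLp (fun x => f x * g x) p μ :=
  have : ENNReal.HolderTriple (2 * p) (2 * p) p := ⟨by
    rw [← two_mul, ENNReal.mul_inv (.inl two_ne_zero) (.inl ENNReal.ofNat_ne_top), ← mul_assoc,
      ENNReal.mul_inv_cancel two_ne_zero ENNReal.ofNat_ne_top, one_mul]⟩
  hg.mul' hf

lemma integrable_mul_mul_mul_of_memLp {α : Type*} [MeasurableSpace α] {μ : Measure α}
    {f g h k : α → ℝ} (hf : MemLp f 4 μ) (hg : MemLp g 4 μ) (hh : MemLp h 4 μ)
    (hk : MemLp k 4 μ) : Integrable (fun x => f x * g x * h x * k x) μ := by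
  rw [show (4 : ℝ≥0∞) = 2 * 2 by norm_num] at hf hg hh hk
  simpa only [Pi.mul_def, mul_assoc] using
    (hf.mul_of_two_mul hg).integrable_mul (hh.mul_of_two_mul hk)

lemma Multiset.prod_map_eq_prod_pow_count {ι M : Type*} [Fintype ι] [DecidableEq ι]
    [CommMonoid M] (s : Multiset ι) (f : ι → M) : (s.map f).prod = ∏ i, f i ^ s.count i := by
  rw [Finset.prod_multiset_map_count]
  exact Finset.prod_subset (Finset.subset_univ _) fun i _ hi => by
    rw [Multiset.count_eq_zero_of_notMem (by simpa using hi), pow_zero]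

section StdGaussian

variable {ι κ : Type*} [Fintype ι] [Fintype κ]

lemma memLp_eval_stdGaussian (a : ι) {p : ℝ≥0∞} (hp : p ≠ ∞) :
    MemLp (fun θ : ι → ℝ => θ a) p (stdGaussian ι) :=
  (memLp_id_gaussianReal' p hp).comp_measurePreserving (measurePreserving_eval _ a)

lemma memLp_dotProduct_stdGaussian (u : ι → ℝ) {p : ℝ≥0∞} (hp : p ≠ ∞) :
    MemLp (fun θ : ι → ℝ => u ⬝ᵥ θ) p (stdGaussian ι) :=
  memLp_finsetSum _ fun i _ => (memLp_eval_stdGaussian i hp).const_mul (u i)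

lemma integrable_dotProduct_mul_four_stdGaussian (u₁ u₂ u₃ u₄ : ι → ℝ) :
    Integrable (fun θ => (u₁ ⬝ᵥ θ) * (u₂ ⬝ᵥ θ) * (u₃ ⬝ᵥ θ) * (u₄ ⬝ᵥ θ)) (stdGaussian ι) :=
  have h (u : ι → ℝ) := memLp_dotProduct_stdGaussian u (p := 4) (by simp)
  integrable_mul_mul_mul_of_memLp (h u₁) (h u₂) (h u₃) (h u₄)

lemma integral_stdGaussian_sum {F : (ι ⊕ κ → ℝ) → ℝ}
    (hF : Integrable F (stdGaussian (ι ⊕ κ))) :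
    ∫ θ, F θ ∂stdGaussian (ι ⊕ κ) =
      ∫ u, ∫ v, F (Sum.elim v u) ∂stdGaussian ι ∂stdGaussian κ := by
  have e := measurePreserving_sumPiEquivProdPi_symm (fun _ : ι ⊕ κ => gaussianReal 0 1)
  rw [_root_.stdGaussian, ← e.integral_comp']
  exact integral_prod_symm _ ((e.integrable_comp_emb (MeasurableEquiv.measurableEmbedding _)).2 hF)

lemma prod_integral_pow_count_gaussianReal [DecidableEq ι] (a b c d : ι) :
    ∏ i, ∫ x, x ^ Multiset.count i {a, b, c, d} ∂gaussianReal 0 1 =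
      (if a = b then 1 else 0) * (if c = d then 1 else 0) +
        (if a = c then 1 else 0) * (if b = d then 1 else 0) +
        (if a = d then 1 else 0) * (if b = c then 1 else 0) := by
  obtain ⟨M, hM⟩ : ∃ M : ℕ → ℝ, ∀ k, ∫ x, x ^ k ∂gaussianReal 0 1 = M k := ⟨_, fun _ => rfl⟩
  have h0 : M 0 = 1 := by simp [← hM]
  have h1 : M 1 = 0 := by rw [← hM]; exact integral_pow_of_odd_gaussianReal odd_one 1
  have h2 : M 2 = 1 := by rw [← hM, integral_sq_gaussianReal, NNReal.coe_one]
  have h3 : M 3 = 0 := by rw [← hM]; exact integral_pow_of_odd_gaussianReal (by decide) 1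
  have h4 : M 4 = 3 := by rw [← hM, integral_pow_four_gaussianReal]
  simp only [hM]
  clear hM
  rw [← Finset.prod_subset (Finset.subset_univ ({a, b, c, d} : Multiset ι).toFinset)
    (fun i _ hi => by rw [Multiset.count_eq_zero_of_notMem (by simpa using hi), h0])]
  by_cases hab : a = b <;> by_cases hac : a = c <;> by_cases had : a = d <;>
    by_cases hbc : b = c <;> by_cases hbd : b = d <;> by_cases hcd : c = d <;> subst_vars <;>
    simp_all [Finset.prod_insert, Multiset.count_cons, eq_comm, one_add_one_eq_two,
      two_add_one_eq_three]

lemma isserlis_eval_stdGaussian [DecidableEq ι] (a b c d : ι) :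
    ∫ θ, θ a * θ b * θ c * θ d ∂stdGaussian ι =
      (if a = b then 1 else 0) * (if c = d then 1 else 0) +
        (if a = c then 1 else 0) * (if b = d then 1 else 0) +
        (if a = d then 1 else 0) * (if b = c then 1 else 0) := by
  have hmonomial (θ : ι → ℝ) :
      θ a * θ b * θ c * θ d = ∏ i, θ i ^ Multiset.count i {a, b, c, d} := by
    rw [← Multiset.prod_map_eq_prod_pow_count]
    simp [mul_assoc]
  simp_rw [hmonomial]
  rw [_root_.stdGaussian,
    integral_fintype_prod_eq_prod (fun i x => x ^ Multiset.count i {a, b, c, d})]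
  exact prod_integral_pow_count_gaussianReal a b c d

theorem isserlis_stdGaussian (u₁ u₂ u₃ u₄ : ι → ℝ) :
    ∫ θ, (u₁ ⬝ᵥ θ) * (u₂ ⬝ᵥ θ) * (u₃ ⬝ᵥ θ) * (u₄ ⬝ᵥ θ) ∂stdGaussian ι =
      (u₁ ⬝ᵥ u₂) * (u₃ ⬝ᵥ u₄) + (u₁ ⬝ᵥ u₃) * (u₂ ⬝ᵥ u₄) + (u₁ ⬝ᵥ u₄) * (u₂ ⬝ᵥ u₃) := by
  classical
  have hcoord (a : ι) := memLp_eval_stdGaussian a (p := 4) (by simp)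
  have hint (a b c d : ι) : Integrable (fun θ : ι → ℝ =>
      u₁ a * u₂ b * u₃ c * u₄ d * (θ a * θ b * θ c * θ d)) (stdGaussian ι) :=
    (integrable_mul_mul_mul_of_memLp (hcoord a) (hcoord b) (hcoord c) (hcoord d)).const_mul _
  have hexpand (θ : ι → ℝ) : (u₁ ⬝ᵥ θ) * (u₂ ⬝ᵥ θ) * (u₃ ⬝ᵥ θ) * (u₄ ⬝ᵥ θ) =
      ∑ d, ∑ c, ∑ b, ∑ a, u₁ a * u₂ b * u₃ c * u₄ d * (θ a * θ b * θ c * θ d) := by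
    simp only [dotProduct, Finset.sum_mul, Finset.mul_sum]
    refine Finset.sum_congr rfl fun _ _ => Finset.sum_congr rfl fun _ _ =>
      Finset.sum_congr rfl fun _ _ => Finset.sum_congr rfl fun _ _ => by ring
  calc _ = ∑ d, ∑ c, ∑ b, ∑ a, u₁ a * u₂ b * u₃ c * u₄ d *
        ∫ θ, θ a * θ b * θ c * θ d ∂stdGaussian ι := by
        simp_rw [hexpand]
        rw [integral_finsetSum _ fun d _ => integrable_finsetSum _ fun c _ =>
          integrable_finsetSum _ fun b _ => integrable_finsetSum _ fun a _ => hint a b c d]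
        refine Finset.sum_congr rfl fun d _ => ?_
        rw [integral_finsetSum _ fun c _ => integrable_finsetSum _ fun b _ =>
          integrable_finsetSum _ fun a _ => hint a b c d]
        refine Finset.sum_congr rfl fun c _ => ?_
        rw [integral_finsetSum _ fun b _ => integrable_finsetSum _ fun a _ => hint a b c d]
        refine Finset.sum_congr rfl fun b _ => ?_
        rw [integral_finsetSum _ fun a _ => hint a b c d]
        exact Finset.sum_congr rfl fun a _ => integral_const_mul _ _
    _ = _ := by
        simp_rw [isserlis_eval_stdGaussian]
        simp [dotProduct, mul_add, Finset.sum_add_distrib, mul_ite, Finset.sum_ite_eq',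
          Finset.mul_sum, Finset.sum_mul]
        rw [Finset.sum_comm (f := fun x y => u₁ x * u₂ y * u₃ y * u₄ x)]
        simp only [mul_comm, mul_left_comm]

lemma uncurry_single_dotProduct [DecidableEq κ] (i : κ) (x : ι → ℝ) (u : κ × ι → ℝ) :
    Function.uncurry (Pi.single i x) ⬝ᵥ u = (of (Function.curry u) *ᵥ x) i := by
  simp [dotProduct, mulVec, Fintype.sum_prod_type, Pi.single_apply, ite_apply, mul_comm]

lemma uncurry_single_dotProduct_uncurry_single [DecidableEq κ] (i j : κ) (x y : ι → ℝ) :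
    Function.uncurry (Pi.single i x) ⬝ᵥ Function.uncurry (Pi.single j y) =
      if i = j then x ⬝ᵥ y else 0 := by
  simp [dotProduct, Fintype.sum_prod_type, Pi.single_apply, ite_apply, ite_mul, mul_ite, eq_comm]

lemma mulVec_dotProduct_mul_mulVec_dotProduct_eq_sum [DecidableEq κ] (x₁ x₂ x₃ x₄ : ι → ℝ)
    (u : κ × ι → ℝ) :
    ((of (Function.curry u) *ᵥ x₁) ⬝ᵥ (of (Function.curry u) *ᵥ x₂)) *
        ((of (Function.curry u) *ᵥ x₃) ⬝ᵥ (of (Function.curry u) *ᵥ x₄)) =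
      ∑ i, ∑ j, (Function.uncurry (Pi.single i x₁) ⬝ᵥ u) *
        (Function.uncurry (Pi.single i x₂) ⬝ᵥ u) * (Function.uncurry (Pi.single j x₃) ⬝ᵥ u) *
        (Function.uncurry (Pi.single j x₄) ⬝ᵥ u) := by
  simp only [uncurry_single_dotProduct]
  rw [dotProduct, dotProduct, Finset.sum_mul_sum]
  exact Finset.sum_congr rfl fun _ _ => Finset.sum_congr rfl fun _ _ => by ring

lemma integrable_mulVec_dotProduct_mul_mulVec_dotProduct_stdGaussian (x₁ x₂ x₃ x₄ : ι → ℝ) :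
    Integrable (fun u : κ × ι → ℝ =>
      ((of (Function.curry u) *ᵥ x₁) ⬝ᵥ (of (Function.curry u) *ᵥ x₂)) *
        ((of (Function.curry u) *ᵥ x₃) ⬝ᵥ (of (Function.curry u) *ᵥ x₄)))
      (stdGaussian (κ × ι)) := by
  classical
  simp_rw [mulVec_dotProduct_mul_mulVec_dotProduct_eq_sum]
  exact integrable_finsetSum _ fun i _ => integrable_finsetSum _ fun j _ =>
    integrable_dotProduct_mul_four_stdGaussian _ _ _ _

theorem integral_mulVec_dotProduct_mul_mulVec_dotProduct_stdGaussian (x₁ x₂ x₃ x₄ : ι → ℝ) :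
    ∫ u, ((of (Function.curry u) *ᵥ x₁) ⬝ᵥ (of (Function.curry u) *ᵥ x₂)) *
        ((of (Function.curry u) *ᵥ x₃) ⬝ᵥ (of (Function.curry u) *ᵥ x₄)) ∂stdGaussian (κ × ι) =
      Fintype.card κ ^ 2 * ((x₁ ⬝ᵥ x₂) * (x₃ ⬝ᵥ x₄)) +
        Fintype.card κ * ((x₁ ⬝ᵥ x₃) * (x₂ ⬝ᵥ x₄) + (x₁ ⬝ᵥ x₄) * (x₂ ⬝ᵥ x₃)) := by
  classical
  simp_rw [mulVec_dotProduct_mul_mulVec_dotProduct_eq_sum]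
  rw [integral_finsetSum _ fun i _ => integrable_finsetSum _ fun j _ =>
    integrable_dotProduct_mul_four_stdGaussian _ _ _ _]
  simp_rw [integral_finsetSum _ fun j _ => integrable_dotProduct_mul_four_stdGaussian _ _ _ _,
    isserlis_stdGaussian, uncurry_single_dotProduct_uncurry_single]
  simp [Finset.sum_add_distrib, Finset.card_univ]
  ring

end StdGaussian

section Network

variable {n D : ℕ}

lemma ip_eq_dotProduct (x y : Fin D → ℝ) : ip x y = x ⬝ᵥ y := rfl

lemma net1_sumElim (v : Fin n → ℝ) (u : Fin n × Fin D → ℝ) (x : Fin D → ℝ) :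
    net1 n D (Sum.elim v u) x =
      (n : ℝ) ^ (-(1 / 2 : ℝ)) * ((of (Function.curry u) *ᵥ x) ⬝ᵥ v) := by
  rw [dotProduct_comm]
  rfl

lemma memLp_net1 (x : Fin D → ℝ) :
    MemLp (fun θ => net1 n D θ x) 4 (stdGaussian (Fin n ⊕ Fin n × Fin D)) := by
  have h8 (t : Fin n ⊕ Fin n × Fin D) := memLp_eval_stdGaussian t (p := 2 * 4) (by norm_num)
  exact (memLp_finsetSum _ fun i _ =>
    (h8 _).mul_of_two_mul (memLp_finsetSum _ fun α _ => (h8 _).mul_const (x α))).const_mul _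

theorem fourPoint_eq (hn : 0 < n) (x₁ x₂ x₃ x₄ : Fin D → ℝ) :
    fourPoint n D x₁ x₂ x₃ x₄ = (1 + 2 / (n : ℝ)) *
      (ip x₁ x₂ * ip x₃ x₄ + ip x₁ x₃ * ip x₂ x₄ + ip x₁ x₄ * ip x₂ x₃) := by
  set h : (Fin n × Fin D → ℝ) → (Fin D → ℝ) → Fin n → ℝ := fun u x => of (Function.curry u) *ᵥ x
    with hh
  have hinner (u : Fin n × Fin D → ℝ) :
      ∫ v, net1 n D (Sum.elim v u) x₁ * net1 n D (Sum.elim v u) x₂ * net1 n D (Sum.elim v u) x₃ *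
          net1 n D (Sum.elim v u) x₄ ∂stdGaussian (Fin n) =
        ((n : ℝ) ^ (-(1 / 2 : ℝ))) ^ 4 * ((h u x₁ ⬝ᵥ h u x₂) * (h u x₃ ⬝ᵥ h u x₄) +
          (h u x₁ ⬝ᵥ h u x₃) * (h u x₂ ⬝ᵥ h u x₄) + (h u x₁ ⬝ᵥ h u x₄) * (h u x₂ ⬝ᵥ h u x₃)) := by
    simp_rw [net1_sumElim, ← isserlis_stdGaussian, ← integral_const_mul]
    congr with v
    ring
  have hint (y₁ y₂ y₃ y₄ : Fin D → ℝ) :=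
    integrable_mulVec_dotProduct_mul_mulVec_dotProduct_stdGaussian (κ := Fin n) y₁ y₂ y₃ y₄
  rw [fourPoint, integral_stdGaussian_sum (integrable_mul_mul_mul_of_memLp (memLp_net1 x₁)
    (memLp_net1 x₂) (memLp_net1 x₃) (memLp_net1 x₄))]
  simp_rw [hinner, hh]
  rw [integral_const_mul, integral_add ((hint _ _ _ _).fun_add (hint _ _ _ _)) (hint _ _ _ _),
    integral_add (hint _ _ _ _) (hint _ _ _ _)]
  simp only [integral_mulVec_dotProduct_mul_mulVec_dotProduct_stdGaussian, Fintype.card_fin,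
    rpow_neg_half_pow_four n.cast_nonneg, ip_eq_dotProduct, dotProduct_comm x₃ x₂,
    dotProduct_comm x₄ x₂, dotProduct_comm x₄ x₃]
  field_simp
  ring

end Network

/-- For the one-hidden-layer linear network with i.i.d. standard Gaussian parameters,
`E[f(x1) f(x2) f(x3) f(x4)] = (1 + 2/n)(⟨x1,x2⟩⟨x3,x4⟩ + ⟨x1,x3⟩⟨x2,x4⟩ + ⟨x1,x4⟩⟨x2,x3⟩)`
exactly; in particular, the four-point function is `O(1)` and its connected part is
`O(n⁻¹)` as `n → ∞`. -/
theorem four_point_function_one_hidden_layer (D : ℕ) (x1 x2 x3 x4 : Fin D → ℝ) :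
    (∀ n : ℕ, 0 < n →
      fourPoint n D x1 x2 x3 x4 =
        (1 + 2 / (n : ℝ)) *
          (ip x1 x2 * ip x3 x4 + ip x1 x3 * ip x2 x4 + ip x1 x4 * ip x2 x3)) ∧
    (fun n : ℕ => fourPoint n D x1 x2 x3 x4) =O[atTop] (fun _ => (1 : ℝ)) ∧
    (fun n : ℕ => fourPoint n D x1 x2 x3 x4 -
        (ip x1 x2 * ip x3 x4 + ip x1 x3 * ip x2 x4 + ip x1 x4 * ip x2 x3))
      =O[atTop] (fun n : ℕ => (n : ℝ)⁻¹) := by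
  set S := ip x1 x2 * ip x3 x4 + ip x1 x3 * ip x2 x4 + ip x1 x4 * ip x2 x3
  have hexact : ∀ n : ℕ, 0 < n → fourPoint n D x1 x2 x3 x4 = (1 + 2 / (n : ℝ)) * S :=
    fun n hn => fourPoint_eq hn x1 x2 x3 x4
  have hev : ∀ᶠ n : ℕ in atTop, (1 + 2 / (n : ℝ)) * S = fourPoint n D x1 x2 x3 x4 :=
    (eventually_gt_atTop 0).mono fun n hn => (hexact n hn).symm
  refine ⟨hexact, ?_, ?_⟩
  · have hlim : Tendsto (fun n : ℕ => (1 + 2 / (n : ℝ)) * S) atTop (nhds S) := by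
      simpa using ((tendsto_const_div_atTop_nhds_zero_nat 2).const_add 1).mul_const S
    exact (hlim.congr' hev).isBigO_one ℝ
  · refine (isBigO_const_mul_self (2 * S) _ _).congr' (hev.mono fun n hn => ?_) .rfl
    dsimp only
    rw [← hn]
    ring
end

section
/- Let G' be a finite simple graph and let G be a subgraph of G' (the vertex set of G is a subset of that of G' and every edge of G is an edge of G'). Let m, n_e, n_o denote respectively the number of vertices of G, the number of connected components of G with an even number of vertices, and the number of connected components of G with an odd number of vertices; let m', n'_e, n'_o denote the same quantities for G'. Then 2·n_e + n_o − m ≥ 2·n'_e + n'_o − m'. -/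
open Finset

private lemma sum_div_two_le {ι : Type*} (s : Finset ι) (f : ι → ℕ) :
    ∑ i ∈ s, f i / 2 ≤ (∑ i ∈ s, f i) / 2 := by
  classical
  induction s using Finset.induction with
  | empty => simp
  | @insert a s h ih => rw [Finset.sum_insert h, Finset.sum_insert h]; omega

private lemma sum_pred_card {ι : Type*} (s : Finset ι) (f : ι → ℕ) (h : ∀ i ∈ s, 1 ≤ f i) :
    ∑ i ∈ s, (f i - 1) + s.card = ∑ i ∈ s, f i := by
  classical
  induction s using Finset.induction with
  | empty => simp
  | @insert a s ha ih =>
    rw [Finset.sum_insert ha, Finset.sum_insert ha, Finset.card_insert_of_notMem ha]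
    have h1 := h a (Finset.mem_insert_self a s)
    have := ih (fun i hi => h i (Finset.mem_insert_of_mem hi))
    omega

private lemma key_nat {ι : Type*} (s : Finset ι) (f : ι → ℕ) (h : ∀ i ∈ s, 1 ≤ f i) (N : ℕ)
    (hN : ∑ i ∈ s, f i ≤ N) : ∑ i ∈ s, (f i - 1) / 2 ≤ (N - 1) / 2 := by
  rcases s.eq_empty_or_nonempty with rfl | hs
  · simp
  · have h1 : 1 ≤ s.card := Finset.card_pos.mpr hs
    have h2 := sum_div_two_le s (fun i => f i - 1)
    have h3 := sum_pred_card s f h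
    have : ∑ i ∈ s, (f i - 1) ≤ N - 1 := by omega
    calc ∑ i ∈ s, (f i - 1) / 2 ≤ (∑ i ∈ s, (f i - 1)) / 2 := h2
      _ ≤ (N - 1) / 2 := Nat.div_le_div_right this

private lemma comp_card_pos {W : Type*} [Fintype W] (H : SimpleGraph W)
    (c : H.ConnectedComponent) :
    1 ≤ Nat.card {v : W // H.connectedComponentMk v = c} := by
  obtain ⟨v, hv⟩ := c.exists_rep
  have : Nonempty {v : W // H.connectedComponentMk v = c} := ⟨⟨v, hv⟩⟩
  exact Nat.card_pos

private lemma graph_count {W : Type*} [Fintype W] (H : SimpleGraph W)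
    [Fintype H.ConnectedComponent] :
    (2 * (Nat.card {c : H.ConnectedComponent //
          Even (Nat.card {v : W // H.connectedComponentMk v = c})}) : ℤ) +
      (Nat.card {c : H.ConnectedComponent //
          Odd (Nat.card {v : W // H.connectedComponentMk v = c})}) -
      Fintype.card W
    = -2 * ((∑ c : H.ConnectedComponent,
        ((Nat.card {v : W // H.connectedComponentMk v = c}) - 1) / 2 : ℕ) : ℤ) := by
  classical
  set sz : H.ConnectedComponent → ℕ :=
    fun c => Nat.card {v : W // H.connectedComponentMk v = c} with hsz
  have hfib : ∀ c, sz c = (univ.filter fun v => H.connectedComponentMk v = c).card := by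
    intro c
    simp only [hsz]
    rw [Nat.card_eq_fintype_card, Fintype.card_subtype]
  have hW : (Fintype.card W : ℤ) = ∑ c : H.ConnectedComponent, (sz c : ℤ) := by
    have := Finset.card_eq_sum_card_fiberwise
      (f := H.connectedComponentMk) (s := univ) (t := univ) (fun x _ => mem_univ _)
    rw [← Finset.card_univ, this]
    push_cast
    exact Finset.sum_congr rfl fun c _ => by rw [hfib c]
  have hpos : ∀ c, 1 ≤ sz c := fun c => comp_card_pos H c
  have he : (Nat.card {c : H.ConnectedComponent // Even (sz c)} : ℤ)
      = (univ.filter fun c => Even (sz c)).card := by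
    rw [Nat.card_eq_fintype_card, Fintype.card_subtype]
  have ho : (Nat.card {c : H.ConnectedComponent // Odd (sz c)} : ℤ)
      = (univ.filter fun c => Odd (sz c)).card := by
    rw [Nat.card_eq_fintype_card, Fintype.card_subtype]
  have hsum : ∑ c : H.ConnectedComponent, (if Even (sz c) then (2:ℤ) else 1)
      = 2 * (univ.filter fun c => Even (sz c)).card
        + (univ.filter fun c => Odd (sz c)).card := by
    rw [Finset.sum_ite, Finset.sum_const, Finset.sum_const]
    have : (univ.filter fun c => ¬ Even (sz c)) = (univ.filter fun c => Odd (sz c)) := by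
      apply Finset.filter_congr
      intro c _
      exact iff_of_eq (propext Nat.not_even_iff_odd)
    rw [this]
    push_cast
    ring
  have percomp : ∀ c : H.ConnectedComponent,
      (if Even (sz c) then (2:ℤ) else 1) - sz c = -2 * (((sz c - 1) / 2 : ℕ) : ℤ) := by
    intro c
    have h1 := hpos c
    rcases Nat.even_or_odd (sz c) with h | h
    · rw [if_pos h]
      rw [Nat.even_iff] at h
      omega
    · rw [if_neg (Nat.not_even_iff_odd.mpr h)]
      rw [Nat.odd_iff] at h
      omega
  calc (2 * (Nat.card {c : H.ConnectedComponent // Even (sz c)}) : ℤ)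
        + (Nat.card {c : H.ConnectedComponent // Odd (sz c)}) - Fintype.card W
      = (∑ c : H.ConnectedComponent, (if Even (sz c) then (2:ℤ) else 1))
        - ∑ c : H.ConnectedComponent, (sz c : ℤ) := by rw [he, ho, hsum, hW]
    _ = ∑ c : H.ConnectedComponent, ((if Even (sz c) then (2:ℤ) else 1) - sz c) := by
        rw [Finset.sum_sub_distrib]
    _ = ∑ c : H.ConnectedComponent, (-2 * (((sz c - 1) / 2 : ℕ) : ℤ)) :=
        Finset.sum_congr rfl fun c _ => percomp c
    _ = -2 * ∑ c : H.ConnectedComponent, (((sz c - 1) / 2 : ℕ) : ℤ) := by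
        rw [← Finset.mul_sum]
    _ = -2 * ((∑ c : H.ConnectedComponent, (sz c - 1) / 2 : ℕ) : ℤ) := by
        rw [Nat.cast_sum]

/-- Subgraph lemma: if `G` is a subgraph of a finite simple graph `G'` (a subset of the
vertices together with a subset of the edges between them), and `m, n_e, n_o` (resp.
`m', n'_e, n'_o`) denote the number of vertices, of even connected components, and of odd
connected components of `G` (resp. of `G'`), then
`2 n_e + n_o − m ≥ 2 n'_e + n'_o − m'`. -/
theorem subgraph_cluster_bound {V : Type*} [Fintype V] (G' : SimpleGraph V) (G : G'.Subgraph) :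
    (2 * (Nat.card {c : G.coe.ConnectedComponent //
          Even (Nat.card {v : G.verts // G.coe.connectedComponentMk v = c})}) : ℤ) +
        (Nat.card {c : G.coe.ConnectedComponent //
          Odd (Nat.card {v : G.verts // G.coe.connectedComponentMk v = c})}) -
        (Nat.card G.verts) ≥
      2 * (Nat.card {c : G'.ConnectedComponent //
          Even (Nat.card {v : V // G'.connectedComponentMk v = c})}) +
        (Nat.card {c : G'.ConnectedComponent //
          Odd (Nat.card {v : V // G'.connectedComponentMk v = c})}) -
        (Fintype.card V) := by
  classical
  letI : Fintype G.verts := Fintype.ofFinite _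
  letI : Fintype G.coe.ConnectedComponent := Fintype.ofFinite _
  letI : Fintype G'.ConnectedComponent := Fintype.ofFinite _
  set φ : G.coe.ConnectedComponent → G'.ConnectedComponent := fun c => c.map G.hom with hφdef
  have hφ : ∀ v : G.verts, φ (G.coe.connectedComponentMk v) = G'.connectedComponentMk v.1 :=
    fun v => rfl
  have szfibG : ∀ c : G.coe.ConnectedComponent,
      Nat.card {v : G.verts // G.coe.connectedComponentMk v = c}
        = (univ.filter fun v : G.verts => G.coe.connectedComponentMk v = c).card := by
    intro c; rw [Nat.card_eq_fintype_card, Fintype.card_subtype]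
  have key : ∀ c' : G'.ConnectedComponent,
      ∑ c ∈ univ.filter (fun c => φ c = c'),
          Nat.card {v : G.verts // G.coe.connectedComponentMk v = c}
        ≤ Nat.card {v : V // G'.connectedComponentMk v = c'} := by
    intro c'
    have step1 : ∑ c ∈ univ.filter (fun c => φ c = c'),
        Nat.card {v : G.verts // G.coe.connectedComponentMk v = c}
        = Nat.card {v : G.verts // φ (G.coe.connectedComponentMk v) = c'} := by
      rw [Nat.card_eq_fintype_card, Fintype.card_subtype]
      rw [Finset.card_eq_sum_card_fiberwise
        (f := G.coe.connectedComponentMk)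
        (t := univ.filter fun c => φ c = c')
        (fun v hv => by simp only [mem_coe, mem_filter, mem_univ, true_and] at hv ⊢; exact hv)]
      apply Finset.sum_congr rfl
      intro c hc
      simp only [mem_filter, mem_univ, true_and] at hc
      rw [szfibG c, Finset.filter_filter]
      apply congrArg Finset.card
      apply Finset.filter_congr
      intro v _
      constructor
      · intro h; exact ⟨by rw [h, hc], h⟩
      · rintro ⟨_, h⟩; exact h
    rw [step1]
    apply Nat.card_le_card_of_injective
      (f := fun x : {v : G.verts // φ (G.coe.connectedComponentMk v) = c'} =>
        (⟨x.1.1, by rw [← hφ x.1]; exact x.2⟩ : {v : V // G'.connectedComponentMk v = c'}))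
    intro x y hxy
    apply Subtype.ext
    apply Subtype.ext
    simpa using congrArg Subtype.val hxy
  have hA : ∑ c : G.coe.ConnectedComponent,
      ((Nat.card {v : G.verts // G.coe.connectedComponentMk v = c}) - 1) / 2
      ≤ ∑ c' : G'.ConnectedComponent,
      ((Nat.card {v : V // G'.connectedComponentMk v = c'}) - 1) / 2 := by
    rw [← Finset.sum_fiberwise_of_maps_to (g := φ) (t := univ) (fun x _ => mem_univ _)]
    apply Finset.sum_le_sum
    intro c' _
    exact key_nat _ _ (fun c _ => comp_card_pos _ c) _ (key c')
  rw [ge_iff_le,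
    show (Nat.card G.verts) = (Fintype.card G.verts) from Nat.card_eq_fintype_card,
    graph_count G.coe, graph_count G']
  have hA' : ((∑ c : G.coe.ConnectedComponent,
      ((Nat.card {v : G.verts // G.coe.connectedComponentMk v = c}) - 1) / 2 : ℕ) : ℤ)
      ≤ ((∑ c' : G'.ConnectedComponent,
      ((Nat.card {v : V // G'.connectedComponentMk v = c'}) - 1) / 2 : ℕ) : ℤ) := by
    exact_mod_cast hA
  linarith
end

section
/- Let γ be a finite simple graph, every connected component of which has an even number of vertices, and let H be a spanning subgraph of γ (same vertex set, edge set contained in that of γ). Let c be the number of connected components of γ, let n_e be the number of connected components of H with an even number of vertices, and n_o the number of connected components of H with an odd number of vertices. Then 2·c ≤ 2·n_e + n_o, i.e. c ≤ n_e + n_o/2. -/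
/-!
Give every component of `H` weight 2 if it is even and 1 if it is odd, so that the right-hand
side is the total weight. Each component of `H` lies in a unique component of `γ`, and it
suffices that the components of `H` inside a fixed component `D` of `γ` weigh at least 2. This
is clear if one of them is even. Otherwise they are all odd, and since their sizes add up to the
even size of `D`, there is an even, nonzero number of them.
-/

open Finset

namespace SimpleGraph

variable {V : Type*} {G G' : SimpleGraph V}

namespace ConnectedComponent

theorem supp_subset_supp_iff_map_ofLE_eq (h : G ≤ G') (c : G.ConnectedComponent)
    (c' : G'.ConnectedComponent) : c.supp ⊆ c'.supp ↔ c.map (Hom.ofLE h) = c' := by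
  induction c using ConnectedComponent.ind with
  | h v => exact ⟨fun hsub ↦ hsub rfl, connectedComponentMk_supp_subset_supp h c'⟩

noncomputable def parityWeight (c : G.ConnectedComponent) : ℕ :=
  if Even c.supp.ncard then 2 else 1

theorem one_le_parityWeight (c : G.ConnectedComponent) : 1 ≤ c.parityWeight := by
  unfold parityWeight; split_ifs <;> omega

theorem parityWeight_of_even {c : G.ConnectedComponent} (hc : Even c.supp.ncard) :
    c.parityWeight = 2 := if_pos hc

end ConnectedComponent

open ConnectedComponent

theorem sum_parityWeight [Fintype G.ConnectedComponent] :
    ∑ c : G.ConnectedComponent, c.parityWeight =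
      2 * Nat.card {c : G.ConnectedComponent // Even c.supp.ncard} +
        Nat.card {c : G.ConnectedComponent // Odd c.supp.ncard} := by
  classical
  simp only [parityWeight, sum_ite, sum_const, Nat.card_eq_fintype_card, Fintype.card_subtype,
    Nat.not_even_iff_odd, smul_eq_mul, mul_one]
  ring

theorem two_le_sum_parityWeight_fiber [Finite V] [Fintype G.ConnectedComponent]
    [DecidableEq G'.ConnectedComponent] (h : G ≤ G') (d : G'.ConnectedComponent)
    (hd : Even d.supp.ncard) :
    2 ≤ ∑ c : G.ConnectedComponent with c.map (Hom.ofLE h) = d, c.parityWeight := by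
  set S := ({c | c.map (Hom.ofLE h) = d} : Finset G.ConnectedComponent)
  by_cases hS : ∃ c ∈ S, Even c.supp.ncard
  · obtain ⟨c, hcS, hc⟩ := hS
    calc 2 = c.parityWeight := (parityWeight_of_even hc).symm
      _ ≤ ∑ c ∈ S, c.parityWeight := single_le_sum (fun _ _ ↦ Nat.zero_le _) hcS
  push Not at hS
  have hS_odd : (S : Set G.ConnectedComponent) = {c ∈ G.oddComponents | c.supp ⊆ d.supp} := by
    ext c
    simp only [S, coe_filter, mem_univ, true_and, Set.mem_ofPred_eq,
      supp_subset_supp_iff_map_ofLE_eq h]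
    exact ⟨fun hc ↦ ⟨Nat.not_even_iff_odd.mp (hS c (by simpa [S] using hc)), hc⟩, And.right⟩
  have hS_even : Even S.card := by
    rw [← Set.ncard_coe_finset, hS_odd, ← Nat.not_odd_iff_even,
      d.odd_oddComponents_ncard_subset_supp _ h]
    exact Nat.not_odd_iff_even.mpr hd
  have hS_pos : 0 < S.card := by
    obtain ⟨v, hv⟩ := d.exists_rep
    refine card_pos.mpr ⟨G.connectedComponentMk v, ?_⟩
    simp only [S, mem_filter, mem_univ, true_and, map_mk]
    exact hv
  calc 2 ≤ S.card := by obtain ⟨k, hk⟩ := hS_even; omega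
    _ = ∑ _c ∈ S, 1 := card_eq_sum_ones S
    _ ≤ ∑ c ∈ S, c.parityWeight := sum_le_sum fun c _ ↦ one_le_parityWeight c

theorem two_mul_card_connectedComponent_le [Finite V] (h : G ≤ G')
    (heven : ∀ d : G'.ConnectedComponent, Even d.supp.ncard) :
    2 * Nat.card G'.ConnectedComponent ≤
      2 * Nat.card {c : G.ConnectedComponent // Even c.supp.ncard} +
        Nat.card {c : G.ConnectedComponent // Odd c.supp.ncard} := by
  have := Fintype.ofFinite G.ConnectedComponent
  have := Fintype.ofFinite G'.ConnectedComponent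
  classical
  calc 2 * Nat.card G'.ConnectedComponent = ∑ _d : G'.ConnectedComponent, 2 := by
        simp [Nat.card_eq_fintype_card, mul_comm]
    _ ≤ ∑ d, ∑ c : G.ConnectedComponent with c.map (Hom.ofLE h) = d, c.parityWeight :=
        sum_le_sum fun d _ ↦ two_le_sum_parityWeight_fiber h d (heven d)
    _ = ∑ c : G.ConnectedComponent, c.parityWeight := sum_fiberwise _ _ _
    _ = _ := sum_parityWeight

end SimpleGraph

/-- If every connected component of a finite simple graph `γ` is even, and `H` is a spanning
subgraph of `γ` (same vertices, `H ≤ γ`), then `2c ≤ 2 n_e + n_o`, where `c` is the number of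
connected components of `γ` and `n_e` (resp. `n_o`) is the number of even (resp. odd)
connected components of `H`. -/
theorem components_bound_of_even_components {V : Type*} [Fintype V]
    (γ H : SimpleGraph V) (hH : H ≤ γ)
    (heven : ∀ c : γ.ConnectedComponent,
      Even (Nat.card {v : V // γ.connectedComponentMk v = c})) :
    2 * Nat.card γ.ConnectedComponent ≤
      2 * Nat.card {c : H.ConnectedComponent //
            Even (Nat.card {v : V // H.connectedComponentMk v = c})} +
        Nat.card {c : H.ConnectedComponent //
            Odd (Nat.card {v : V // H.connectedComponentMk v = c})} :=
  -- `c.supp.ncard` unfolds to `Nat.card {v // G.connectedComponentMk v = c}`.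
  SimpleGraph.two_mul_card_connectedComponent_le hH heven
end
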